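/- arXiv:math/0511133 — 2 statements merged into one kernel-verified Lean document; each statement's English description precedes it below -/
import Mathlib

section
/- Let r ≥ 0 and let a_1, ..., a_{2^{r+1}+1} be integers such that the total sum S = a_1 + ... + a_{2^{r+1}+1} satisfies S ≡ 0 (mod 2^{r+1}) and S ≠ 0. Then there exists a nonempty set of indices I which is either a consecutive block {i+1, ..., j} with 1 ≤ i < j ≤ 2^{r+1}+1, or the complement of such a block, such that the sum of a_k over k ∈ I is congruent to 0 mod 2^{r+1} and is nonzero as an integer. -/
/-!
Among the `n + 1` prefix sums `P i = a 1 + ⋯ + a i`, `1 ≤ i ≤ n + 1`, two agree modulo `n`, so some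
block `{i + 1, …, j}` has sum divisible by `n`. If that sum is nonzero we are done; if it vanishes,
the complementary indices carry the whole sum, which is a nonzero multiple of `n` by hypothesis.
-/

open Finset

theorem Finset.exists_lt_dvd_sub_of_card_lt {α : Type*} [LinearOrder α] {s : Finset α} {n : ℕ}
    [NeZero n] (f : α → ℤ) (hs : n < #s) : ∃ i ∈ s, ∃ j ∈ s, i < j ∧ (n : ℤ) ∣ f j - f i := by
  have hcard : #(univ : Finset (ZMod n)) < #s := by rwa [card_univ, ZMod.card]
  obtain ⟨i, hi, j, hj, hij, hf⟩ :=
    exists_ne_map_eq_of_card_lt_of_maps_to hcard (f := fun i => (f i : ZMod n))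
      fun _ _ => mem_coe.2 (mem_univ _)
  rcases hij.lt_or_gt with hlt | hgt
  · exact ⟨i, hi, j, hj, hlt, (ZMod.intCast_eq_intCast_iff_dvd_sub _ _ _).1 hf⟩
  · exact ⟨j, hj, i, hi, hgt, (ZMod.intCast_eq_intCast_iff_dvd_sub _ _ _).1 hf.symm⟩

theorem Finset.sum_Icc_add_one_eq_sub (a : ℕ → ℤ) {i j : ℕ} (hij : i ≤ j) :
    ∑ k ∈ Icc (i + 1) j, a k = ∑ k ∈ Ioc 0 j, a k - ∑ k ∈ Ioc 0 i, a k := by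
  rw [Icc_add_one_left_eq_Ioc, ← sum_Ioc_consecutive a i.zero_le hij, add_sub_cancel_left]

theorem exists_block_dvd_sum (n : ℕ) [NeZero n] (a : ℕ → ℤ) :
    ∃ i j, 1 ≤ i ∧ i < j ∧ j ≤ n + 1 ∧ (n : ℤ) ∣ ∑ k ∈ Icc (i + 1) j, a k := by
  obtain ⟨i, hi, j, hj, hij, hdvd⟩ :=
    exists_lt_dvd_sub_of_card_lt (s := Icc 1 (n + 1)) (n := n)
      (fun i => ∑ k ∈ Ioc 0 i, a k) (by simp)
  rw [mem_Icc] at hi hj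
  exact ⟨i, j, hi.1, hij, hj.2, by rwa [sum_Icc_add_one_eq_sub a hij.le]⟩

theorem exists_block_or_compl_dvd_sum_ne_zero (n : ℕ) [NeZero n] (a : ℕ → ℤ)
    (hmod : (n : ℤ) ∣ ∑ k ∈ Icc 1 (n + 1), a k) (hne : ∑ k ∈ Icc 1 (n + 1), a k ≠ 0) :
    ∃ (i j : ℕ) (I : Finset ℕ), 1 ≤ i ∧ i < j ∧ j ≤ n + 1 ∧
      (I = Icc (i + 1) j ∨ I = Icc 1 (n + 1) \ Icc (i + 1) j) ∧
      I.Nonempty ∧ (n : ℤ) ∣ ∑ k ∈ I, a k ∧ ∑ k ∈ I, a k ≠ 0 := by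
  obtain ⟨i, j, hi, hij, hj, hdvd⟩ := exists_block_dvd_sum n a
  by_cases hzero : ∑ k ∈ Icc (i + 1) j, a k = 0
  · have hsub : Icc (i + 1) j ⊆ Icc 1 (n + 1) := Icc_subset_Icc (by omega) hj
    have hcompl : ∑ k ∈ Icc 1 (n + 1) \ Icc (i + 1) j, a k = ∑ k ∈ Icc 1 (n + 1), a k := by
      rw [sum_sdiff_eq_sub hsub, hzero, sub_zero]
    refine ⟨i, j, _, hi, hij, hj, Or.inr rfl, ⟨1, ?_⟩, hcompl ▸ hmod, hcompl ▸ hne⟩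
    simp only [mem_sdiff, mem_Icc]
    omega
  · exact ⟨i, j, _, hi, hij, hj, Or.inl rfl, nonempty_Icc.2 hij, hdvd, hzero⟩

theorem stmt_0 (r : ℕ) (a : ℕ → ℤ)
    (hmod : (2 ^ (r + 1) : ℤ) ∣ ∑ k ∈ Finset.Icc 1 (2 ^ (r + 1) + 1), a k)
    (hne : (∑ k ∈ Finset.Icc 1 (2 ^ (r + 1) + 1), a k) ≠ 0) :
    ∃ (i j : ℕ) (I : Finset ℕ), 1 ≤ i ∧ i < j ∧ j ≤ 2 ^ (r + 1) + 1 ∧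
      (I = Finset.Icc (i + 1) j ∨
        I = Finset.Icc 1 (2 ^ (r + 1) + 1) \ Finset.Icc (i + 1) j) ∧
      I.Nonempty ∧
      (2 ^ (r + 1) : ℤ) ∣ (∑ k ∈ I, a k) ∧ (∑ k ∈ I, a k) ≠ 0 := by
  exact_mod_cast exists_block_or_compl_dvd_sum_ne_zero (2 ^ (r + 1)) a (mod_cast hmod) hne
end

section
/- Let n ≥ 2 be even and let a_1, ..., a_n be elements of ℤ/2ℤ with total sum 0. Then the cyclic sequence (a_1, ..., a_n) can be partitioned into at least n/2 nonempty cyclically-consecutive blocks, each summing to 0 in ℤ/2ℤ. In particular, starting from 3·2^{k−1} such elements and iterating block-fusion k−1 times, at least 3 blocks remain. -/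
/-!
Let `S i = a 0 + ⋯ + a (i - 1)`. Cutting the cyclic sequence at positions `p < q` where `S p = S q`
gives a block with sum `S q - S p = 0`, and since `S n = 0` the wrapping block from the last cut
around to the first one also sums to zero. In `ℤ/2ℤ` the prefix sums `S 0, …, S (n - 1)` take one
of their two values at least `n / 2` times; cutting at those positions gives the blocks.
-/

open Finset

variable {G : Type*} [AddCommGroup G]

lemma sum_range_add_mod_of_sum_eq_zero (a : ℕ → G) {n : ℕ} (hsum : ∑ i ∈ range n, a i = 0)
    (m : ℕ) : ∑ j ∈ range (m + n), a (j % n) = ∑ j ∈ range m, a (j % n) := by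
  have hperiod : ∑ j ∈ range n, a (j % n) = 0 := by
    rw [← hsum]
    exact sum_congr rfl fun j hj => by rw [Nat.mod_eq_of_lt (mem_range.mp hj)]
  rw [add_comm, sum_range_add, hperiod, zero_add]
  simp only [Nat.add_mod_left]

lemma exists_cyclic_enumeration {n : ℕ} {P : Finset ℕ} (hPn : P ⊆ range n) (hP : P.Nonempty) :
    ∃ c : ℕ → ℕ, Monotone c ∧ (∀ i < #P, c i ∈ P) ∧ (∀ i < #P, c i < c (i + 1)) ∧
      c #P = c 0 + n := by
  set k := #P
  have hk : 0 < k := card_pos.mpr hP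
  set e := P.orderEmbOfFin rfl
  set c : ℕ → ℕ := fun i => if h : i < k then e ⟨i, h⟩ else e ⟨0, hk⟩ + n with hc
  have hc_mem : ∀ i (h : i < k), c i ∈ P := fun i h => by
    simpa only [hc, dif_pos h] using P.orderEmbOfFin_mem rfl ⟨i, h⟩
  have hc_step : ∀ i < k, c i < c (i + 1) := by
    intro i hi
    by_cases h : i + 1 < k
    · simp only [hc, dif_pos hi, dif_pos h]
      exact e.strictMono (Fin.mk_lt_mk.mpr i.lt_succ_self)
    · have := mem_range.mp (hPn (hc_mem i hi))
      simp only [hc, dif_neg h] at this ⊢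
      omega
  have hc_mono : Monotone c := monotone_nat_of_le_succ fun i => by
    by_cases hi : i < k
    · exact (hc_step i hi).le
    · simp only [hc, dif_neg hi, dif_neg (show ¬i + 1 < k by omega), le_refl]
  exact ⟨c, hc_mono, hc_mem, hc_step, by simp only [hc, dif_neg (lt_irrefl k), dif_pos hk]⟩

theorem exists_zero_sum_cyclic_blocks (a : ℕ → G) {n : ℕ} (hsum : ∑ i ∈ range n, a i = 0)
    {P : Finset ℕ} (hPn : P ⊆ range n) (hP : P.Nonempty)
    (hconst : ∀ p ∈ P, ∀ q ∈ P, ∑ j ∈ range p, a j = ∑ j ∈ range q, a j) :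
    ∃ (t : ℕ) (l : ℕ → ℕ), (∀ i < #P, 1 ≤ l i) ∧ ∑ i ∈ range #P, l i = n ∧
      ∀ i < #P, ∑ j ∈ range (l i), a ((t + ∑ i' ∈ range i, l i' + j) % n) = 0 := by
  obtain ⟨c, hc_mono, hc_mem, hc_step, hc_last⟩ := exists_cyclic_enumeration hPn hP
  have hk : 0 < #P := card_pos.mpr hP
  have hc_lt : ∀ i < #P, c i < n := fun i h => mem_range.mp (hPn (hc_mem i h))
  -- Prefix sums of the `n`-periodic extension of `a`: every block sum is a difference of two.
  set F : ℕ → G := fun m => ∑ j ∈ range m, a (j % n)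
  have hF : ∀ i ≤ #P, F (c i) = F (c 0) := by
    have hFS : ∀ i < #P, F (c i) = ∑ j ∈ range (c i), a j := fun i hi =>
      sum_congr rfl fun j hj => by
        rw [Nat.mod_eq_of_lt ((mem_range.mp hj).trans (hc_lt i hi))]
    intro i hi
    rcases hi.lt_or_eq with hi | rfl
    · rw [hFS i hi, hFS 0 hk]
      exact hconst _ (hc_mem i hi) _ (hc_mem 0 hk)
    · rw [hc_last]
      exact sum_range_add_mod_of_sum_eq_zero a hsum _
  have hprefix : ∀ i, ∑ i' ∈ range i, (c (i' + 1) - c i') = c i - c 0 :=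
    sum_range_tsub hc_mono
  refine ⟨c 0, fun i => c (i + 1) - c i, fun i hi => Nat.sub_pos_of_lt (hc_step i hi), ?_, ?_⟩
  · rw [hprefix, hc_last]
    omega
  · intro i hi
    rw [hprefix, show c 0 + (c i - c 0) = c i by have := hc_mono (Nat.zero_le i); omega,
      ← sum_range_add_sub_sum_range (fun m => a (m % n)),
      show c i + (c (i + 1) - c i) = c (i + 1) by have := hc_step i hi; omega]
    change F (c (i + 1)) - F (c i) = 0
    rw [hF (i + 1) hi, hF i hi.le, sub_self]

theorem stmt_11_general (n : ℕ) (hn : 2 ≤ n) (a : ℕ → ZMod 2)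
    (hsum : ∑ i ∈ Finset.range n, a i = 0) :
    (∃ (k t : ℕ) (l : ℕ → ℕ), n / 2 ≤ k ∧ (∀ i < k, 1 ≤ l i) ∧
      (∑ i ∈ Finset.range k, l i) = n ∧
      ∀ i < k, (∑ j ∈ Finset.range (l i),
        a ((t + (∑ i' ∈ Finset.range i, l i') + j) % n)) = 0) ∧
    (∀ k : ℕ, 1 ≤ k → 3 * 2 ^ (k - 1) / 2 ^ (k - 1) = 3) := by
  refine ⟨?_, fun k _ => Nat.mul_div_cancel 3 (by positivity)⟩
  obtain ⟨v, -, hv⟩ := exists_le_card_fiber_of_mul_le_card_of_maps_to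
    (f := fun i => ∑ j ∈ range i, a j) (s := range n) (t := univ) (n := n / 2)
    (fun _ _ => mem_univ _) univ_nonempty
    (by simpa only [card_univ, ZMod.card, card_range] using Nat.mul_div_le n 2)
  have hP : {i ∈ range n | ∑ j ∈ range i, a j = v}.Nonempty := card_pos.mp (by omega)
  obtain ⟨t, l, hl_pos, hl_sum, hl_zero⟩ := exists_zero_sum_cyclic_blocks a hsum
    (filter_subset _ _) hP fun p hp q hq => (mem_filter.mp hp).2.trans (mem_filter.mp hq).2.symm
  exact ⟨_, t, l, hv, hl_pos, hl_sum, hl_zero⟩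

theorem stmt_11 (n : ℕ) (hn : 2 ≤ n) (hev : Even n) (a : ℕ → ZMod 2)
    (hsum : ∑ i ∈ Finset.range n, a i = 0) :
    (∃ (k t : ℕ) (l : ℕ → ℕ), n / 2 ≤ k ∧ (∀ i < k, 1 ≤ l i) ∧
      (∑ i ∈ Finset.range k, l i) = n ∧
      ∀ i < k, (∑ j ∈ Finset.range (l i),
        a ((t + (∑ i' ∈ Finset.range i, l i') + j) % n)) = 0) ∧
    (∀ k : ℕ, 1 ≤ k → 3 * 2 ^ (k - 1) / 2 ^ (k - 1) = 3) :=
  stmt_11_general n hn a hsum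
end
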